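/- Let a, b, δ > 0 with a ≠ b. Then the minimum distance between the boundary ellipse ∂E(a,b) and the enlarged boundary ellipse ∂E(a+δ, b+δ) is strictly less than δ: there exist u ∈ ∂E(a,b) and w ∈ ∂E(a+δ, b+δ) with ‖u − w‖ < δ. -/

import Mathlib

/-!
The points `u = (a cos t, b sin t)` of `∂E(a,b)` and `w = ((a+δ) cos t, (b+δ) sin t)` of
`∂E(a+δ,b+δ)` are exactly `δ` apart. The derivative of `s ↦ ‖(a cos s, b sin s) - w‖²` at `s = t`
is `δ (a - b) sin 2t`, which is nonzero at `t = π/4` when `a ≠ b`: the segment `uw` is not normal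
to `∂E(a,b)`, so moving `u` along the ellipse brings it strictly closer to `w`.
-/

open Real

def ellipseBoundary (a b : ℝ) : Set (EuclideanSpace ℝ (Fin 2)) :=
  {p | (p 0) ^ 2 / a ^ 2 + (p 1) ^ 2 / b ^ 2 = 1}

lemma exists_lt_of_hasDerivAt_ne_zero {f : ℝ → ℝ} {c d : ℝ}
    (hf : HasDerivAt f d c) (hd : d ≠ 0) : ∃ s, f s < f c := by
  by_contra! hmin
  have hloc : IsLocalMin f c := Filter.Eventually.of_forall hmin
  exact hd (hloc.hasDerivAt_eq_zero hf)

noncomputable def ellipsePoint (a b s : ℝ) : EuclideanSpace ℝ (Fin 2) :=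
  !₂[a * cos s, b * sin s]

lemma ellipsePoint_mem_ellipseBoundary {a b : ℝ} (ha : a ≠ 0) (hb : b ≠ 0) (s : ℝ) :
    ellipsePoint a b s ∈ ellipseBoundary a b := by
  change (a * cos s) ^ 2 / a ^ 2 + (b * sin s) ^ 2 / b ^ 2 = 1
  field_simp
  linear_combination sin_sq_add_cos_sq s

lemma norm_ellipsePoint_sub_sq (a b a' b' s t : ℝ) :
    ‖ellipsePoint a b s - ellipsePoint a' b' t‖ ^ 2 =
      (a * cos s - a' * cos t) ^ 2 + (b * sin s - b' * sin t) ^ 2 := by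
  rw [EuclideanSpace.norm_sq_eq, Fin.sum_univ_two]
  simp [ellipsePoint, sq_abs]

lemma norm_ellipsePoint_sub_add_add_sq (a b δ t : ℝ) :
    ‖ellipsePoint a b t - ellipsePoint (a + δ) (b + δ) t‖ ^ 2 = δ ^ 2 := by
  rw [norm_ellipsePoint_sub_sq]
  linear_combination δ ^ 2 * sin_sq_add_cos_sq t

lemma hasDerivAt_norm_ellipsePoint_sub_sq (a b a' b' t : ℝ) :
    HasDerivAt (fun s ↦ ‖ellipsePoint a b s - ellipsePoint a' b' t‖ ^ 2)
      (2 * sin t * cos t * ((a' - a) * a - (b' - b) * b)) t := by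
  simp_rw [norm_ellipsePoint_sub_sq]
  have hx := (((hasDerivAt_cos t).const_mul a).sub_const (a' * cos t)).fun_pow 2
  have hy := (((hasDerivAt_sin t).const_mul b).sub_const (b' * sin t)).fun_pow 2
  refine (hx.fun_add hy).congr_deriv ?_
  push_cast
  ring

/-- For `a ≠ b`, the minimum distance between `∂E(a,b)` and `∂E(a+δ, b+δ)` is
strictly less than `δ`. -/
theorem boundary_dist_lt_delta
    (a b δ : ℝ) (ha : 0 < a) (hb : 0 < b) (hδ : 0 < δ) (hab : a ≠ b) :
    ∃ u ∈ ellipseBoundary a b, ∃ w ∈ ellipseBoundary (a + δ) (b + δ), ‖u - w‖ < δ := by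
  have hderiv_ne : 2 * sin (π / 4) * cos (π / 4) * ((a + δ - a) * a - (b + δ - b) * b) ≠ 0 := by
    rw [← sin_two_mul, show 2 * (π / 4) = π / 2 by ring, sin_pi_div_two]
    simpa [← mul_sub] using And.intro hδ.ne' (sub_ne_zero.mpr hab)
  obtain ⟨s, hs⟩ := exists_lt_of_hasDerivAt_ne_zero
    (hasDerivAt_norm_ellipsePoint_sub_sq a b (a + δ) (b + δ) (π / 4)) hderiv_ne
  refine ⟨ellipsePoint a b s, ellipsePoint_mem_ellipseBoundary ha.ne' hb.ne' s,
    ellipsePoint (a + δ) (b + δ) (π / 4),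
    ellipsePoint_mem_ellipseBoundary (by positivity) (by positivity) _, ?_⟩
  rw [norm_ellipsePoint_sub_add_add_sq] at hs
  exact lt_of_pow_lt_pow_left₀ 2 hδ.le hs
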